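/- Lévy inversion formula: for a Borel probability measure μ on ℝ with characteristic function φ(s) = ∫ e^{ist} dμ(t), and real numbers a < b with μ({a}) = μ({b}) = 0, one has μ((a, b]) = lim_{c→∞} (1/2π) ∫_{-c}^{c} (e^{-isa} - e^{-isb})/(is) · φ(s) ds. -/

import Mathlib

open MeasureTheory Complex Filter Real

open Set Topology
open scoped Interval

/-!
With Si z = ∫₀ᶻ sin x / x dx, Fubini in (s, t) turns the truncated inversion integral into
∫ (Si (c (t - a)) - Si (c (t - b))) / π dμ(t): pairing s with -s makes the kernel real, since
(e^{isx} - 1)/(is) + (e^{-isx} - 1)/(-is) = 2 sin (sx) / s. As Si is continuous, odd and tends to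
π/2 at +∞, it is bounded, and the integrand tends to the indicator of (a, b] off {a, b}, a μ-null
set; dominated convergence concludes. The Dirichlet limit Si c → π/2 comes from writing
1/x = ∫₀^∞ e^{-xt} dt and swapping the integrals, which gives |Si c - π/2| ≤ 2/c.
-/

namespace Real

noncomputable def sineIntegral (z : ℝ) : ℝ := ∫ x in 0..z, sinc x

lemma integral_exp_neg_mul_Ioi_zero {x : ℝ} (hx : 0 < x) :
    ∫ t in Ioi (0 : ℝ), rexp (-x * t) = x⁻¹ := by
  rw [integral_exp_mul_Ioi (neg_neg_of_pos hx)]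
  simp

lemma integral_exp_neg_mul_mul_sin (t c : ℝ) :
    ∫ x in 0..c, rexp (-t * x) * sin x
      = (1 - rexp (-t * c) * (cos c + t * sin c)) / (1 + t ^ 2) := by
  have hderiv : ∀ x ∈ uIcc (0 : ℝ) c,
      HasDerivAt (fun x => -(rexp (-t * x) * (cos x + t * sin x)) / (1 + t ^ 2))
        (rexp (-t * x) * sin x) x := by
    intro x _
    have := (((((hasDerivAt_id x).const_mul (-t)).exp).fun_mul
      ((hasDerivAt_cos x).fun_add ((hasDerivAt_sin x).const_mul t))).fun_neg).div_const (1 + t ^ 2)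
    refine this.congr_deriv ?_
    simp only [id, mul_one]
    field_simp
    ring
  rw [intervalIntegral.integral_eq_sub_of_hasDerivAt hderiv
    ((by fun_prop : Continuous fun x => rexp (-t * x) * sin x).intervalIntegrable 0 c)]
  simp only [neg_mul, mul_zero, exp_zero, cos_zero, sin_zero, add_zero, mul_one]
  ring

lemma integrable_sin_mul_exp_neg_mul (c : ℝ) :
    Integrable (fun p : ℝ × ℝ => sin p.1 * rexp (-p.1 * p.2))
      ((volume.restrict (Ioc 0 c)).prod (volume.restrict (Ioi 0))) := by
  have hmeas : AEStronglyMeasurable (fun p : ℝ × ℝ => sin p.1 * rexp (-p.1 * p.2))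
      ((volume.restrict (Ioc 0 c)).prod (volume.restrict (Ioi 0))) :=
    (by fun_prop : Continuous fun p : ℝ × ℝ => sin p.1 * rexp (-p.1 * p.2)).aestronglyMeasurable
  refine (integrable_prod_iff hmeas).2 ⟨?_, ?_⟩
  · filter_upwards [ae_restrict_mem measurableSet_Ioc] with x hx
    exact (exp_neg_integrableOn_Ioi 0 hx.1).const_mul (sin x)
  · refine (integrable_const (1 : ℝ)).mono' hmeas.norm.integral_prod_right' ?_
    filter_upwards [ae_restrict_mem measurableSet_Ioc] with x hx
    have hnorm : ∫ t in Ioi 0, ‖sin x * rexp (-x * t)‖ = |sinc x| := by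
      simp_rw [norm_mul, norm_of_nonneg (exp_pos _).le]
      rw [integral_const_mul, integral_exp_neg_mul_Ioi_zero hx.1, sinc_of_ne_zero hx.1.ne', abs_div,
        abs_of_pos hx.1, Real.norm_eq_abs, div_eq_mul_inv]
    rw [hnorm, norm_of_nonneg (abs_nonneg _)]
    exact abs_sinc_le_one x

lemma sineIntegral_eq_integral_Ioi {c : ℝ} (hc : 0 ≤ c) :
    sineIntegral c = ∫ t in Ioi 0, (1 - rexp (-t * c) * (cos c + t * sin c)) / (1 + t ^ 2) :=
  calc sineIntegral c = ∫ x in Ioc 0 c, ∫ t in Ioi 0, sin x * rexp (-x * t) := by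
        rw [sineIntegral, intervalIntegral.integral_of_le hc]
        refine setIntegral_congr_fun measurableSet_Ioc fun x hx => ?_
        rw [integral_const_mul, integral_exp_neg_mul_Ioi_zero hx.1, sinc_of_ne_zero hx.1.ne',
          div_eq_mul_inv]
    _ = ∫ t in Ioi 0, ∫ x in Ioc 0 c, sin x * rexp (-x * t) :=
        integral_integral_swap (integrable_sin_mul_exp_neg_mul c)
    _ = ∫ t in Ioi 0, (1 - rexp (-t * c) * (cos c + t * sin c)) / (1 + t ^ 2) := by
        refine setIntegral_congr_fun measurableSet_Ioi fun t _ => ?_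
        rw [← integral_exp_neg_mul_mul_sin, intervalIntegral.integral_of_le hc]
        refine setIntegral_congr_fun measurableSet_Ioc fun x _ => ?_
        ring_nf

lemma abs_exp_neg_mul_mul_cos_add_sin_div_le (c : ℝ) {t : ℝ} (ht : 0 ≤ t) :
    |rexp (-t * c) * (cos c + t * sin c) / (1 + t ^ 2)| ≤ 2 * rexp (-c * t) := by
  have hcs : |cos c + t * sin c| ≤ 2 * (1 + t ^ 2) :=
    calc |cos c + t * sin c| ≤ |cos c| + t * |sin c| := by
          simpa [abs_mul, abs_of_nonneg ht] using abs_add_le (cos c) (t * sin c)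
      _ ≤ 1 + t * 1 := by gcongr; exacts [abs_cos_le_one c, abs_sin_le_one c]
      _ ≤ 2 * (1 + t ^ 2) := by nlinarith
  have hpos : (0 : ℝ) < 1 + t ^ 2 := by positivity
  rw [abs_div, abs_mul, abs_of_pos (exp_pos _), abs_of_pos hpos, div_le_iff₀ hpos,
    show -t * c = -c * t by ring]
  nlinarith [mul_le_mul_of_nonneg_left hcs (exp_pos (-c * t)).le]

lemma integrableOn_exp_neg_mul_mul_cos_add_sin_div {c : ℝ} (hc : 0 < c) :
    IntegrableOn (fun t => rexp (-t * c) * (cos c + t * sin c) / (1 + t ^ 2)) (Ioi 0) := by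
  have hcont : Continuous fun t => rexp (-t * c) * (cos c + t * sin c) / (1 + t ^ 2) :=
    .div (by fun_prop) (by fun_prop) fun t => by positivity
  refine ((exp_neg_integrableOn_Ioi 0 hc).const_mul 2).mono' hcont.aestronglyMeasurable ?_
  filter_upwards [ae_restrict_mem measurableSet_Ioi] with t ht
  exact abs_exp_neg_mul_mul_cos_add_sin_div_le c (le_of_lt ht)

lemma abs_sineIntegral_sub_pi_div_two_le {c : ℝ} (hc : 0 < c) :
    |sineIntegral c - π / 2| ≤ 2 / c := by
  have hpi : π / 2 = ∫ t in Ioi (0 : ℝ), (1 + t ^ 2)⁻¹ := by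
    rw [integral_Ioi_inv_one_add_sq]; simp
  have hrem := integrableOn_exp_neg_mul_mul_cos_add_sin_div hc
  have hsplit : (fun t => (1 - rexp (-t * c) * (cos c + t * sin c)) / (1 + t ^ 2))
      = fun t => (1 + t ^ 2)⁻¹ - rexp (-t * c) * (cos c + t * sin c) / (1 + t ^ 2) := by
    ext t; ring
  have hsub : sineIntegral c - π / 2
      = -∫ t in Ioi 0, rexp (-t * c) * (cos c + t * sin c) / (1 + t ^ 2) := by
    rw [sineIntegral_eq_integral_Ioi hc.le, hsplit, hpi,
      integral_sub integrable_inv_one_add_sq.integrableOn hrem]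
    ring
  rw [hsub, abs_neg, ← Real.norm_eq_abs]
  calc ‖∫ t in Ioi 0, rexp (-t * c) * (cos c + t * sin c) / (1 + t ^ 2)‖
      ≤ ∫ t in Ioi 0, 2 * rexp (-c * t) := by
        refine norm_integral_le_of_norm_le ((exp_neg_integrableOn_Ioi 0 hc).const_mul 2) ?_
        filter_upwards [ae_restrict_mem measurableSet_Ioi] with t ht
        exact abs_exp_neg_mul_mul_cos_add_sin_div_le c (le_of_lt ht)
    _ = 2 / c := by rw [integral_const_mul, integral_exp_neg_mul_Ioi_zero hc, div_eq_mul_inv]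

lemma tendsto_sineIntegral_atTop : Tendsto sineIntegral atTop (𝓝 (π / 2)) := by
  have hdecay : Tendsto (fun c : ℝ => 2 / c) atTop (𝓝 0) := tendsto_const_nhds.div_atTop tendsto_id
  refine tendsto_sub_nhds_zero_iff.1 (squeeze_zero_norm' ?_ hdecay)
  filter_upwards [eventually_gt_atTop 0] with c hc
  exact abs_sineIntegral_sub_pi_div_two_le hc

lemma sineIntegral_neg (z : ℝ) : sineIntegral (-z) = -sineIntegral z := by
  have h := intervalIntegral.integral_comp_neg (a := 0) (b := -z) sinc
  simp only [sinc_neg, neg_neg, neg_zero] at h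
  rw [sineIntegral, sineIntegral, h, intervalIntegral.integral_symm]

lemma tendsto_sineIntegral_atBot : Tendsto sineIntegral atBot (𝓝 (-(π / 2))) := by
  have := tendsto_sineIntegral_atTop.neg.comp tendsto_neg_atBot_atTop
  refine this.congr fun z => ?_
  simp [sineIntegral_neg]

@[fun_prop]
lemma continuous_sineIntegral : Continuous sineIntegral :=
  intervalIntegral.continuous_primitive (fun _ _ => continuous_sinc.intervalIntegrable _ _) 0

lemma isBounded_range_sineIntegral : Bornology.IsBounded (range sineIntegral) :=
  continuous_sineIntegral.isBounded_range_iff_isBigO_atTop_atBot.2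
    ⟨tendsto_sineIntegral_atTop.isBigO_one ℝ, tendsto_sineIntegral_atBot.isBigO_one ℝ⟩

end Real

lemma intervalIntegral.integral_neg_self_eq_integral_add_comp_neg {E : Type*}
    [NormedAddCommGroup E] [NormedSpace ℝ E] {f : ℝ → E} {c : ℝ}
    (hf : IntervalIntegrable f volume (-c) c) :
    ∫ s in -c..c, f s = ∫ s in 0..c, (f s + f (-s)) := by
  have h0 : (0 : ℝ) ∈ uIcc (-c) c := by
    rcases le_total 0 c with h | h <;> simp [uIcc, h]
  have hleft : IntervalIntegrable f volume (-c) 0 := hf.mono_set (uIcc_subset_uIcc_left h0)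
  have hright : IntervalIntegrable f volume 0 c := hf.mono_set (uIcc_subset_uIcc_right h0)
  have hneg : IntervalIntegrable (fun s => f (-s)) volume 0 c := by
    simpa using ((IntervalIntegrable.iff_comp_neg (a := -c) (b := 0)).1 hleft).symm
  rw [integral_add hright hneg, integral_comp_neg, neg_zero, add_comm,
    integral_add_adjacent_intervals hleft hright]

lemma norm_cexp_sub_cexp_div_le (s x y : ℝ) :
    ‖(cexp (I * s * x) - cexp (I * s * y)) / (I * s)‖ ≤ |x - y| := by
  rcases eq_or_ne s 0 with rfl | hs
  · simp
  have hfac : cexp (I * s * x) - cexp (I * s * y)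
      = cexp (I * ↑(s * y)) * (cexp (I * ↑(s * (x - y))) - 1) := by
    rw [mul_sub, ← Complex.exp_add]; push_cast; ring_nf
  rw [hfac, norm_div, norm_mul, norm_exp_I_mul_ofReal, one_mul, norm_mul, norm_I, one_mul,
    norm_real, div_le_iff₀ (norm_pos_iff.2 hs)]
  calc ‖cexp (I * ↑(s * (x - y))) - 1‖ ≤ ‖s * (x - y)‖ := Real.norm_exp_I_mul_ofReal_sub_one_le
    _ = |x - y| * ‖s‖ := by rw [norm_mul, Real.norm_eq_abs, Real.norm_eq_abs, mul_comm]

lemma intervalIntegrable_cexp_sub_one_div (x u v : ℝ) :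
    IntervalIntegrable (fun s : ℝ => (cexp (I * s * x) - 1) / (I * s)) volume u v := by
  have hmeas : Measurable fun s : ℝ => (cexp (I * s * x) - 1) / (I * s) :=
    .div (by fun_prop) (by fun_prop)
  refine (intervalIntegrable_const (c := |x|)).mono_fun' hmeas.aestronglyMeasurable ?_
  refine ae_of_all _ fun s => ?_
  simpa using norm_cexp_sub_cexp_div_le s x 0

lemma cexp_sub_one_div_add_comp_neg (x : ℝ) {s : ℝ} (hs : s ≠ 0) :
    (cexp (I * s * x) - 1) / (I * s) + (cexp (I * ↑(-s) * x) - 1) / (I * ↑(-s))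
      = ((2 * x * sinc (x * s) : ℝ) : ℂ) := by
  rcases eq_or_ne x 0 with rfl | hx
  · simp
  rw [sinc_of_ne_zero (mul_ne_zero hx hs)]
  have hsC : (s : ℂ) ≠ 0 := ofReal_ne_zero.2 hs
  have hxC : (x : ℂ) ≠ 0 := ofReal_ne_zero.2 hx
  push_cast
  rw [Complex.sin]
  field_simp
  rw [I_sq]
  ring

lemma integral_cexp_sub_one_div (x c : ℝ) :
    ∫ s in -c..c, (cexp (I * s * x) - 1) / (I * s) = 2 * sineIntegral (c * x) := by
  rw [intervalIntegral.integral_neg_self_eq_integral_add_comp_neg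
    (intervalIntegrable_cexp_sub_one_div x _ _)]
  have hsym : ∀ᵐ s ∂volume, s ∈ Ι 0 c → (cexp (I * s * x) - 1) / (I * s)
      + (cexp (I * ↑(-s) * x) - 1) / (I * ↑(-s)) = ((2 * x * sinc (x * s) : ℝ) : ℂ) := by
    filter_upwards [Measure.ae_ne volume 0] with s hs _
    exact cexp_sub_one_div_add_comp_neg x hs
  rw [intervalIntegral.integral_congr_ae hsym, intervalIntegral.integral_ofReal,
    intervalIntegral.integral_const_mul, mul_assoc, ← smul_eq_mul x,
    intervalIntegral.smul_integral_comp_mul_left, mul_zero, mul_comm x c, sineIntegral]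
  push_cast
  ring

lemma integral_cexp_sub_cexp_div (x y c : ℝ) :
    ∫ s in -c..c, (cexp (I * s * x) - cexp (I * s * y)) / (I * s)
      = ((2 * (sineIntegral (c * x) - sineIntegral (c * y)) : ℝ) : ℂ) := by
  have hsplit : ∀ s : ℝ, (cexp (I * s * x) - cexp (I * s * y)) / (I * s)
      = (cexp (I * s * x) - 1) / (I * s) - (cexp (I * s * y) - 1) / (I * s) := fun s => by ring
  simp_rw [hsplit]
  rw [intervalIntegral.integral_sub (intervalIntegrable_cexp_sub_one_div x _ _)
    (intervalIntegrable_cexp_sub_one_div y _ _), integral_cexp_sub_one_div,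
    integral_cexp_sub_one_div]
  push_cast
  ring

lemma integral_levy_integrand_eq (μ : Measure ℝ) [IsFiniteMeasure μ] (a b c : ℝ) :
    ∫ s in -c..c, (cexp (-(I * s * a)) - cexp (-(I * s * b))) / (I * s) *
        ∫ t, cexp (I * s * t) ∂μ
      = ∫ t, ((2 * (sineIntegral (c * (t - a)) - sineIntegral (c * (t - b))) : ℝ) : ℂ) ∂μ := by
  have hkernel : ∀ s t : ℝ,
      (cexp (-(I * s * a)) - cexp (-(I * s * b))) / (I * s) * cexp (I * s * t)
      = (cexp (I * s * ↑(t - a)) - cexp (I * s * ↑(t - b))) / (I * s) := fun s t => by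
    rw [div_mul_eq_mul_div, sub_mul, ← Complex.exp_add, ← Complex.exp_add]
    push_cast
    ring_nf
  have hmeas : Measurable (Function.uncurry fun (s t : ℝ) =>
      (cexp (I * s * ↑(t - a)) - cexp (I * s * ↑(t - b))) / (I * s)) :=
    .div (by fun_prop) (by fun_prop)
  have hint : Integrable (Function.uncurry fun (s t : ℝ) =>
      (cexp (I * s * ↑(t - a)) - cexp (I * s * ↑(t - b))) / (I * s))
      ((volume.restrict (Ι (-c) c)).prod μ) := by
    have : IsFiniteMeasure (volume.restrict (Ι (-c) c)) :=
      isFiniteMeasure_restrict.2 (by simp [uIoc])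
    refine (integrable_const |b - a|).mono' hmeas.aestronglyMeasurable (ae_of_all _ fun p => ?_)
    simpa only [Function.uncurry, sub_sub_sub_cancel_left, abs_sub_comm] using
      norm_cexp_sub_cexp_div_le p.1 (p.2 - a) (p.2 - b)
  simp_rw [← integral_const_mul, hkernel]
  rw [intervalIntegral_integral_swap hint]
  simp_rw [integral_cexp_sub_cexp_div]

lemma tendsto_sineIntegral_mul_of_pos {x : ℝ} (hx : 0 < x) :
    Tendsto (fun c => sineIntegral (c * x)) atTop (𝓝 (π / 2)) :=
  tendsto_sineIntegral_atTop.comp (tendsto_id.atTop_mul_const hx)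

lemma tendsto_sineIntegral_mul_of_neg {x : ℝ} (hx : x < 0) :
    Tendsto (fun c => sineIntegral (c * x)) atTop (𝓝 (-(π / 2))) :=
  tendsto_sineIntegral_atBot.comp (tendsto_id.atTop_mul_const_of_neg hx)

lemma tendsto_sineIntegral_sub_div_pi {a b t : ℝ} (hab : a ≤ b) (hta : t ≠ a) (htb : t ≠ b) :
    Tendsto (fun c => (sineIntegral (c * (t - a)) - sineIntegral (c * (t - b))) / π) atTop
      (𝓝 ((Ioc a b).indicator 1 t)) := by
  rcases hta.lt_or_gt with hta | hta
  · rw [indicator_of_notMem fun h => hta.not_gt h.1]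
    simpa using ((tendsto_sineIntegral_mul_of_neg (sub_neg.2 hta)).sub
      (tendsto_sineIntegral_mul_of_neg (sub_neg.2 (hta.trans_le hab)))).div_const π
  rcases htb.lt_or_gt with htb | htb
  · rw [indicator_of_mem (show t ∈ Ioc a b from ⟨hta, htb.le⟩), Pi.one_apply]
    convert ((tendsto_sineIntegral_mul_of_pos (sub_pos.2 hta)).sub
      (tendsto_sineIntegral_mul_of_neg (sub_neg.2 htb))).div_const π using 2
    field_simp
    ring
  · rw [indicator_of_notMem fun h => htb.not_ge h.2]
    simpa using ((tendsto_sineIntegral_mul_of_pos (sub_pos.2 hta)).sub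
      (tendsto_sineIntegral_mul_of_pos (sub_pos.2 htb))).div_const π

lemma tendsto_integral_sineIntegral_sub_div_pi (μ : Measure ℝ) [IsFiniteMeasure μ] {a b : ℝ}
    (hab : a ≤ b) (ha : μ {a} = 0) (hb : μ {b} = 0) :
    Tendsto (fun c => ∫ t, (sineIntegral (c * (t - a)) - sineIntegral (c * (t - b))) / π ∂μ) atTop
      (𝓝 (μ.real (Ioc a b))) := by
  obtain ⟨M, hM⟩ := isBounded_iff_forall_norm_le.1 isBounded_range_sineIntegral
  rw [← integral_indicator_one measurableSet_Ioc]
  refine tendsto_integral_filter_of_dominated_convergence (fun _ => 2 * M / π)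
    (.of_forall fun c => ?_) (.of_forall fun c => .of_forall fun t => ?_) (integrable_const _) ?_
  · exact (by fun_prop : Continuous fun t =>
      (sineIntegral (c * (t - a)) - sineIntegral (c * (t - b))) / π).aestronglyMeasurable
  · rw [norm_div, Real.norm_of_nonneg pi_pos.le, two_mul]
    gcongr
    exact (norm_sub_le _ _).trans (add_le_add (hM _ (mem_range_self _)) (hM _ (mem_range_self _)))
  · filter_upwards [compl_mem_ae_iff.2 ha, compl_mem_ae_iff.2 hb] with t hta htb
    exact tendsto_sineIntegral_sub_div_pi hab hta htb

/-- Lévy inversion formula: for a probability measure μ on ℝ with no atoms at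
a and b (a < b), μ((a,b]) is recovered from its characteristic function. -/
theorem levy_inversion (μ : Measure ℝ) [IsProbabilityMeasure μ]
    (a b : ℝ) (hab : a < b) (ha : μ {a} = 0) (hb : μ {b} = 0) :
    Tendsto (fun c : ℝ =>
        (1 / (2 * (π : ℂ))) * ∫ s in (-c)..c,
          ((Complex.exp (-(Complex.I * s * a)) - Complex.exp (-(Complex.I * s * b)))
              / (Complex.I * s)) *
            ∫ t : ℝ, Complex.exp (Complex.I * s * t) ∂μ)
      atTop (nhds ((μ (Set.Ioc a b)).toReal : ℂ)) := by
  have hrewrite : ∀ c : ℝ, (1 / (2 * (π : ℂ))) * ∫ s in (-c)..c,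
      (cexp (-(I * s * a)) - cexp (-(I * s * b))) / (I * s) * ∫ t, cexp (I * s * t) ∂μ
      = ((∫ t, (sineIntegral (c * (t - a)) - sineIntegral (c * (t - b))) / π ∂μ : ℝ) : ℂ) := by
    intro c
    rw [integral_levy_integrand_eq, integral_complex_ofReal, integral_const_mul, integral_div]
    push_cast
    field_simp
  simp_rw [hrewrite]
  exact (continuous_ofReal.tendsto _).comp
    (tendsto_integral_sineIntegral_sub_div_pi μ hab.le ha hb)
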